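/- arXiv:math/0609621 — 2 statements merged into one kernel-verified Lean document; each statement's English description precedes it below -/
import Mathlib

section
/- Let (z_1,...,z_n) be unimodular complex numbers with S(ν) = ∑_{k=1}^n z_k^ν. If max_{ν=1,...,n²−n} |S(ν)| = √(n−1), then |S(ν)| = √(n−1) for every ν = 1, ..., n²−n. -/
open Finset Complex ComplexConjugate

/-!
For `M` exponents `0 ≤ μ < M`, the Gram matrix `G μ μ' = ∑ⱼ zⱼ ^ μ * conj (zⱼ ^ μ')` and the matrix
`B j k = ∑_μ (zⱼ * conj zₖ) ^ μ` have the same Frobenius norm (up to conjugation they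
are `Aᴴ A` and `A Aᴴ` for `A = (zⱼ ^ μ)`). The diagonal of `B` alone contributes `n M²`, while
`G` has diagonal entries `n` and off-diagonal entries of modulus `|S(|μ - μ'|)|`, whence
`n M² ≤ M n² + ∑_{μ ≠ μ'} |S(|μ - μ'|)|²`.
For `M = n² - n + 1`, the bound `|S(m)|² ≤ n - 1` makes the right side at most `n M²`, so the
inequality is tight and no `|S(m)|²` with `1 ≤ m ≤ n² - n` can be smaller than `n - 1`.
-/

theorem sum_sq_norm_gram_comm {ι κ : Type*} (s : Finset ι) (t : Finset κ) (a : ι → κ → ℂ) :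
    ∑ μ ∈ t, ∑ μ' ∈ t, ‖∑ j ∈ s, a j μ * conj (a j μ')‖ ^ 2 =
      ∑ j ∈ s, ∑ k ∈ s, ‖∑ μ ∈ t, a j μ * conj (a k μ)‖ ^ 2 := by
  apply Complex.ofReal_injective
  push_cast
  simp only [← mul_conj', map_sum, map_mul, conj_conj, sum_mul_sum, ← sum_product']
  exact sum_nbij' (fun x ↦ (x.2.2.1, x.2.2.2, x.1, x.2.1)) (fun x ↦ (x.2.2.1, x.2.2.2, x.1, x.2.1))
    (by simp +contextual) (by simp +contextual) (by simp) (by simp) fun _ _ ↦ by ring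

theorem pow_mul_conj_pow_of_norm_eq_one {w : ℂ} (hw : ‖w‖ = 1) {μ μ' : ℕ} (h : μ' ≤ μ) :
    w ^ μ * conj (w ^ μ') = w ^ (μ - μ') := by
  rw [pow_sub₀ w (norm_ne_zero_iff.mp (by simp [hw])) h, map_pow, ← inv_eq_conj hw, inv_pow]

section Unimodular

variable {ι : Type*} {z : ι → ℂ}

theorem norm_sum_pow_mul_conj_pow (hz : ∀ k, ‖z k‖ = 1) (s : Finset ι) (μ μ' : ℕ) :
    ‖∑ j ∈ s, z j ^ μ * conj (z j ^ μ')‖ = ‖∑ j ∈ s, z j ^ Nat.dist μ μ'‖ := by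
  wlog h : μ' ≤ μ generalizing μ μ'
  · rw [← norm_conj, map_sum, Nat.dist_comm]
    simpa [mul_comm] using this μ' μ (by omega)
  simp_rw [Nat.dist_comm μ, Nat.dist_eq_sub_of_le h, pow_mul_conj_pow_of_norm_eq_one (hz _) h]

variable [Fintype ι]

theorem card_mul_sq_le_sum_sq_norm_gram (hz : ∀ k, ‖z k‖ = 1) (M : ℕ) :
    Fintype.card ι * (M : ℝ) ^ 2 ≤
      ∑ μ ∈ range M, ∑ μ' ∈ range M, ‖∑ j, z j ^ μ * conj (z j ^ μ')‖ ^ 2 := by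
  rw [sum_sq_norm_gram_comm]
  calc Fintype.card ι * (M : ℝ) ^ 2
      = ∑ j, ‖∑ μ ∈ range M, z j ^ μ * conj (z j ^ μ)‖ ^ 2 := by
        simp_rw [pow_mul_conj_pow_of_norm_eq_one (hz _) le_rfl]
        simp
    _ ≤ ∑ j, ∑ k, ‖∑ μ ∈ range M, z j ^ μ * conj (z k ^ μ)‖ ^ 2 :=
        sum_le_sum fun j _ ↦
          single_le_sum (f := fun k ↦ ‖∑ μ ∈ range M, z j ^ μ * conj (z k ^ μ)‖ ^ 2)
            (fun _ _ ↦ by positivity) (mem_univ j)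

theorem card_mul_sq_le_add_sum_offDiag (hz : ∀ k, ‖z k‖ = 1) (M : ℕ) :
    Fintype.card ι * (M : ℝ) ^ 2 ≤
      M * Fintype.card ι ^ 2 + ∑ p ∈ (range M).offDiag, ‖∑ j, z j ^ Nat.dist p.1 p.2‖ ^ 2 := by
  have h := card_mul_sq_le_sum_sq_norm_gram hz M
  rw [← sum_product', ← diag_union_offDiag, sum_union (disjoint_diag_offDiag _), sum_diag] at h
  simp_rw [norm_sum_pow_mul_conj_pow hz] at h
  simpa using h

end Unimodular

theorem sum_offDiag_range_dist_lt {N ν : ℕ} {f : ℕ → ℝ} {c : ℝ}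
    (hf : ∀ m ∈ Icc 1 N, f m ≤ c) (hν : ν ∈ Icc 1 N) (hfν : f ν < c) :
    ∑ p ∈ (range (N + 1)).offDiag, f (Nat.dist p.1 p.2) < (N + 1) * N * c := by
  have hdist : ∀ p ∈ (range (N + 1)).offDiag, Nat.dist p.1 p.2 ∈ Icc 1 N := by
    intro p hp
    simp only [mem_offDiag, mem_range] at hp
    simp only [mem_Icc, Nat.dist]
    omega
  have hν0 : (ν, 0) ∈ (range (N + 1)).offDiag := by
    simp only [mem_Icc] at hν
    simp only [mem_offDiag, mem_range]
    omega
  calc ∑ p ∈ (range (N + 1)).offDiag, f (Nat.dist p.1 p.2)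
      < ∑ _p ∈ (range (N + 1)).offDiag, c :=
        sum_lt_sum (fun p hp ↦ hf _ (hdist p hp)) ⟨(ν, 0), hν0, by simpa [Nat.dist] using hfν⟩
    _ = (N + 1) * N * c := by
        rw [sum_const, offDiag_card, card_range, nsmul_eq_mul, mul_add_one (N + 1),
          Nat.add_sub_cancel]
        push_cast
        ring

theorem power_sum_equality_case (n : ℕ) (hn : 1 ≤ n) (z : Fin n → ℂ)
    (hz : ∀ k, ‖z k‖ = 1)
    (hmax : ∀ ν ∈ Finset.Icc 1 (n ^ 2 - n),
      ‖∑ k, z k ^ ν‖ ≤ Real.sqrt ((n : ℝ) - 1)) :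
    ∀ ν ∈ Finset.Icc 1 (n ^ 2 - n),
      ‖∑ k, z k ^ ν‖ = Real.sqrt ((n : ℝ) - 1) := by
  intro ν hν
  refine le_antisymm (hmax ν hν) (not_lt.mp fun hlt ↦ ?_)
  have hn' : (0 : ℝ) ≤ n - 1 := by simp [hn]
  have hoff := sum_offDiag_range_dist_lt (f := fun m ↦ ‖∑ k, z k ^ m‖ ^ 2)
    (fun m hm ↦ (Real.le_sqrt (norm_nonneg _) hn').mp (hmax m hm)) hν
    ((Real.lt_sqrt (norm_nonneg _)).mp hlt)
  have hturan := card_mul_sq_le_add_sum_offDiag hz (n ^ 2 - n + 1)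
  have hN : ((n ^ 2 - n : ℕ) : ℝ) = n ^ 2 - n := by
    rw [Nat.cast_sub (Nat.le_self_pow two_ne_zero n)]
    push_cast
    ring
  rw [Fintype.card_fin] at hturan
  push_cast [hN] at hoff hturan
  linarith
end

section
/- Let (a_1, ..., a_n) be a perfect difference set of order n−1 modulo N = n²−n+1, let α be a complex number with |α| = 1, and set z_k = α·e^{2πi a_k/N}. Then |∑_{k=1}^n z_k^ν| = √(n−1) for every ν = 1, ..., n²−n. -/
/-!
Write `ψ` for the additive character `x ↦ exp (2πiνx/N)` of `ZMod N`, nontrivial for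
`0 < ν < N`, so that `z k ^ ν = α ^ ν * ψ (a k)`. Expanding `|∑ ψ (a k)|²` gives
`∑_{j,k} ψ (a j - a k)`: the `n` diagonal terms contribute `n`, and since the off-diagonal
differences run exactly once through the nonzero residues, they contribute
`∑_{c ≠ 0} ψ c = -1`. Hence `|∑ z k ^ ν|² = n - 1`.
-/

open Finset Complex Real

def IsPerfectDifferenceSet {ι G : Type*} [AddGroup G] (f : ι → G) : Prop :=
  ∀ c : G, c ≠ 0 → ∃! p : ι × ι, p.1 ≠ p.2 ∧ f p.1 - f p.2 = c

namespace IsPerfectDifferenceSet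

variable {ι G : Type*} [Fintype ι] [AddGroup G] [Fintype G] {f : ι → G}

theorem sum_filter_sub_ne_zero [DecidableEq G] {M : Type*} [AddCommGroup M] (hf : IsPerfectDifferenceSet f)
    (g : G → M) :
    ∑ p : ι × ι with f p.1 - f p.2 ≠ 0, g (f p.1 - f p.2) = ∑ c, g c - g 0 := by
  rw [← sum_erase_eq_sub (mem_univ 0)]
  refine sum_nbij (fun p ↦ f p.1 - f p.2) (fun p hp ↦ ?_) (fun p hp q hq hpq ↦ ?_)
    (fun c hc ↦ ?_) (fun _ _ ↦ rfl)
  · simpa using (mem_filter.mp hp).2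
  · have hp0 := (mem_filter.mp hp).2
    have hq0 := (mem_filter.mp hq).2
    have hp1 : p.1 ≠ p.2 := fun h ↦ hp0 (by rw [h, sub_self])
    have hq1 : q.1 ≠ q.2 := fun h ↦ hq0 (by rw [h, sub_self])
    exact (hf _ hp0).unique ⟨hp1, rfl⟩ ⟨hq1, hpq.symm⟩
  · have hc0 : c ≠ 0 := ne_of_mem_erase hc
    obtain ⟨p, ⟨-, hp⟩, -⟩ := hf c hc0
    exact ⟨p, by simp [hp, hc0], hp⟩

theorem sum_addChar_sub (hf : IsPerfectDifferenceSet f) {ψ : AddChar G ℂ}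
    (hψ : ψ ≠ 0) :
    ∑ p : ι × ι, ψ (f p.1 - f p.2) = Fintype.card ι ^ 2 - Fintype.card G := by
  classical
  -- subtracting 1 kills the diagonal terms, so only the differences `≠ 0` remain
  have hdiag : ∀ p : ι × ι, ψ (f p.1 - f p.2) - 1 ≠ 0 → f p.1 - f p.2 ≠ 0 := by
    intro p hp h
    simp [h] at hp
  have hsum := hf.sum_filter_sub_ne_zero (fun c ↦ ψ c - 1)
  rw [sum_filter_of_ne fun p _ ↦ hdiag p, sum_sub_distrib, sum_sub_distrib,
    AddChar.sum_eq_zero_iff_ne_zero.mpr hψ] at hsum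
  simp only [sum_const, card_univ, Fintype.card_prod, AddChar.map_zero_eq_one, sub_self,
    nsmul_eq_mul, mul_one, sub_zero, zero_sub] at hsum
  push_cast at hsum
  linear_combination hsum

end IsPerfectDifferenceSet

theorem AddChar.sq_norm_sum_apply {ι G : Type*} [Fintype ι] [AddCommGroup G] [Finite G]
    (ψ : AddChar G ℂ) (f : ι → G) :
    ((‖∑ i, ψ (f i)‖ ^ 2 : ℝ) : ℂ) = ∑ p : ι × ι, ψ (f p.1 - f p.2) := by
  rw [ofReal_pow, ← mul_conj', map_sum, sum_mul_sum, Fintype.sum_prod_type]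
  simp only [← AddChar.map_neg_eq_conj, ← AddChar.map_add_eq_mul, sub_eq_add_neg]

theorem IsPerfectDifferenceSet.sq_norm_sum_addChar {ι G : Type*} [Fintype ι] [AddCommGroup G]
    [Fintype G] {f : ι → G} (hf : IsPerfectDifferenceSet f) {ψ : AddChar G ℂ} (hψ : ψ ≠ 0) :
    ‖∑ i, ψ (f i)‖ ^ 2 = (Fintype.card ι : ℝ) ^ 2 - Fintype.card G := by
  exact_mod_cast (ψ.sq_norm_sum_apply f).trans (hf.sum_addChar_sub hψ)

theorem ZMod.stdAddChar_mulShift_intCast {N : ℕ} [NeZero N] (ν : ℕ) (m : ℤ) :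
    ZMod.stdAddChar.mulShift (ν : ZMod N) (m : ZMod N) = exp (2 * π * I * m / N) ^ ν := by
  rw [AddChar.mulShift_apply, ← Int.cast_natCast, ← Int.cast_mul, ZMod.stdAddChar_coe,
    ← Complex.exp_nat_mul]
  push_cast
  ring_nf

theorem ZMod.stdAddChar_mulShift_ne_zero {N ν : ℕ} [NeZero N] (hν : 0 < ν) (hνN : ν < N) :
    ZMod.stdAddChar.mulShift (ν : ZMod N) ≠ 0 := by
  refine ZMod.isPrimitive_stdAddChar N fun h ↦ ?_
  rw [ZMod.natCast_eq_zero_iff] at h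
  exact (Nat.le_of_dvd hν h).not_gt hνN

theorem fabrykowski_construction_general (n : ℕ) (a : Fin n → ℤ)
    (ha : ∀ c : ZMod (n ^ 2 - n + 1), c ≠ 0 →
      ∃! p : Fin n × Fin n,
        p.1 ≠ p.2 ∧ ((a p.1 - a p.2 : ℤ) : ZMod (n ^ 2 - n + 1)) = c)
    (α : ℂ) (hα : ‖α‖ = 1) (z : Fin n → ℂ)
    (hzdef : ∀ k, z k = α * Complex.exp (2 * Real.pi * Complex.I * (a k : ℝ) / (n ^ 2 - n + 1 : ℝ))) :
    ∀ ν ∈ Finset.Icc 1 (n ^ 2 - n),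
      ‖∑ k, z k ^ ν‖ = Real.sqrt ((n : ℝ) - 1) := by
  intro ν hν
  obtain ⟨hν1, hν2⟩ := mem_Icc.mp hν
  have hn : n ≤ n ^ 2 := Nat.le_self_pow two_ne_zero n
  have hN : ((n ^ 2 - n + 1 : ℕ) : ℝ) = (n : ℝ) ^ 2 - n + 1 := by
    rw [Nat.cast_add_one, Nat.cast_sub hn, Nat.cast_pow]
  have hf : IsPerfectDifferenceSet fun k ↦ (a k : ZMod (n ^ 2 - n + 1)) := by
    simpa only [IsPerfectDifferenceSet, Int.cast_sub] using ha
  set ψ := ZMod.stdAddChar.mulShift (ν : ZMod (n ^ 2 - n + 1))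
  have hψ : ψ ≠ 0 := ZMod.stdAddChar_mulShift_ne_zero hν1 (by omega)
  have hz : ∀ k, z k ^ ν = α ^ ν * ψ (a k) := by
    intro k
    rw [hzdef, mul_pow, ZMod.stdAddChar_mulShift_intCast]
    rw [← hN, ofReal_natCast, ofReal_intCast]
  have hsq := hf.sq_norm_sum_addChar hψ
  rw [Fintype.card_fin, ZMod.card, hN] at hsq
  simp only [hz, ← mul_sum, norm_mul, norm_pow, hα, one_pow, one_mul]
  rw [← Real.sqrt_sq (norm_nonneg _), hsq]
  congr 1
  ring

theorem fabrykowski_construction (n : ℕ) (hn : 2 ≤ n) (a : Fin n → ℤ)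
    (ha : ∀ c : ZMod (n ^ 2 - n + 1), c ≠ 0 →
      ∃! p : Fin n × Fin n,
        p.1 ≠ p.2 ∧ ((a p.1 - a p.2 : ℤ) : ZMod (n ^ 2 - n + 1)) = c)
    (α : ℂ) (hα : ‖α‖ = 1) (z : Fin n → ℂ)
    (hzdef : ∀ k, z k = α * Complex.exp (2 * Real.pi * Complex.I * (a k : ℝ) / (n ^ 2 - n + 1 : ℝ))) :
    ∀ ν ∈ Finset.Icc 1 (n ^ 2 - n),
      ‖∑ k, z k ^ ν‖ = Real.sqrt ((n : ℝ) - 1) :=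
  fabrykowski_construction_general n a ha α hα z hzdef
end
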